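/- Let P be a compact subset of the Euclidean plane, and let s, t ∈ P. Then there exists an optimal pair for the min-sum quickest pair-visibility problem: a pair (s*, t*) of points of P with segment ℝ s* t* ⊆ P such that for every pair (p, q) of points of P with segment ℝ p q ⊆ P one has d_P(s, s*) + d_P(t, t*) ≤ d_P(s, p) + d_P(t, q) (addition in ℝ≥0∞). -/

import Mathlib

open scoped ENNReal

noncomputable abbrev E2 : Type := EuclideanSpace ℝ (Fin 2)

/-- The geodesic (intrinsic) distance in `P`: the infimum of path lengths
(`eVariationOn γ Set.univ`) over continuous paths `γ : [0,1] → E` staying in `P`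
from `x` to `y`; `∞` if no such finite-length path exists. -/
noncomputable def geoDist (P : Set E2) (x y : E2) : ℝ≥0∞ :=
  sInf { l : ℝ≥0∞ | ∃ γ : Set.Icc (0:ℝ) 1 → E2,
    Continuous γ ∧ Set.range γ ⊆ P ∧
    γ ⟨0, by norm_num⟩ = x ∧ γ ⟨1, by norm_num⟩ = y ∧
    eVariationOn γ Set.univ = l }

/-! The objective `(p, q) ↦ d_P(s, p) + d_P(t, q)` is lower semicontinuous and the visible pairs
form a compact set containing `(s, s)`, so the objective attains its minimum there.

Lower semicontinuity of `d_P(x, ·)`: a path of finite length `ℓ` can be run at constant speed,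
which gives an `ℓ`-Lipschitz path on `[0, 1]` with the same endpoints and range. For `yₙ → y`,
near-optimal paths to the `yₙ` are therefore uniformly Lipschitz with values in the compact `P`;
their pointwise limit along an ultrafilter is a Lipschitz path to `y`, and its length is at most
the limit of theirs, since variation is lower semicontinuous under pointwise convergence. -/

open Set Filter Topology
open scoped NNReal

theorem continuousOn_variationOnFromTo {α E : Type*} [LinearOrder α] [TopologicalSpace α]
    [OrderTopology α] [PseudoMetricSpace E] {f : α → E} {s : Set α} {a : α}
    (hf : LocallyBoundedVariationOn f s) (hfc : ContinuousOn f s) (ha : a ∈ s) :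
    ContinuousOn (variationOnFromTo f s a) s := by
  intro b hb
  have hleft : ContinuousWithinAt (variationOnFromTo f s a) (s ∩ Iio b) b := by
    simpa [ContinuousWithinAt] using
      variationOnFromTo.tendsto_left ha hb hf ((hfc b hb).mono inter_subset_left)
  have hright : ContinuousWithinAt (variationOnFromTo f s a) (s ∩ Ioi b) b := by
    simpa [ContinuousWithinAt] using
      variationOnFromTo.tendsto_right ha hb hf ((hfc b hb).mono inter_subset_left)
  refine (continuousWithinAt_insert_self.2 (hleft.union hright)).mono fun x hx => ?_
  rcases lt_trichotomy x b with h | rfl | h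
  exacts [Or.inr (Or.inl ⟨hx, h⟩), Or.inl rfl, Or.inr (Or.inr ⟨hx, h⟩)]

theorem HasConstantSpeedOnWith.lipschitzOnWith {E : Type*} [PseudoMetricSpace E] {f : ℝ → E}
    {s : Set ℝ} {l : ℝ≥0} (h : HasConstantSpeedOnWith f s l) : LipschitzOnWith l f s := by
  refine LipschitzOnWith.of_dist_le_mul fun x hx y hy => ?_
  wlog hxy : x ≤ y generalizing x y
  · rw [dist_comm, dist_comm x]
    exact this y hy x hx (le_of_not_ge hxy)
  have hvar := eVariationOn.edist_le f (s := s ∩ Icc x y) ⟨hx, le_rfl, hxy⟩ ⟨hy, hxy, le_rfl⟩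
  rw [h hx hy, edist_dist, ENNReal.ofReal_le_ofReal_iff (by positivity)] at hvar
  rwa [Real.dist_eq, abs_of_nonpos (by linarith), neg_sub]

theorem eVariationOn_IccExtend {α E : Type*} [LinearOrder α] [PseudoEMetricSpace E] {a b : α}
    (h : a ≤ b) (f : Icc a b → E) :
    eVariationOn (IccExtend h f) (Icc a b) = eVariationOn f univ := by
  rw [IccExtend, eVariationOn.comp_eq_of_monotoneOn f _ ((monotone_projIcc h).monotoneOn _),
    (projIcc_surjOn h).image_eq_of_mapsTo (mapsTo_univ _ _)]

theorem exists_lipschitzWith_reparam {E : Type*} [MetricSpace E] {g : ℝ → E}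
    (hgc : ContinuousOn g (Icc 0 1)) (hg : BoundedVariationOn g (Icc 0 1)) :
    ∃ σ : Icc (0 : ℝ) 1 → E, LipschitzWith (eVariationOn g (Icc 0 1)).toNNReal σ ∧
      range σ ⊆ g '' Icc 0 1 ∧ σ 0 = g 0 ∧ σ 1 = g 1 ∧
      eVariationOn σ univ ≤ eVariationOn g (Icc 0 1) := by
  set L : ℝ≥0 := (eVariationOn g (Icc 0 1)).toNNReal
  have h0 : (0 : ℝ) ∈ Icc (0 : ℝ) 1 := left_mem_Icc.2 zero_le_one
  have h1 : (1 : ℝ) ∈ Icc (0 : ℝ) 1 := right_mem_Icc.2 zero_le_one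
  have hv0 : variationOnFromTo g (Icc 0 1) 0 0 = 0 := variationOnFromTo.self _ _ _
  have hv1 : variationOnFromTo g (Icc 0 1) 0 1 = L := by
    rw [variationOnFromTo.eq_of_le _ _ zero_le_one, inter_self]; rfl
  -- Continuity of `g` makes the natural parametrisation defined on all of `[0, L]`.
  have hrange : Icc 0 (L : ℝ) ⊆ variationOnFromTo g (Icc 0 1) 0 '' Icc 0 1 := by
    have := intermediate_value_Icc zero_le_one
      (continuousOn_variationOnFromTo hg.locallyBoundedVariationOn hgc h0)
    rwa [hv0, hv1] at this
  set v := variationOnFromTo g (Icc 0 1) 0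
  set φ := naturalParameterization g (Icc 0 1) 0
  have hφ : HasUnitSpeedOn φ (v '' Icc 0 1) :=
    has_unit_speed_naturalParameterization g hg.locallyBoundedVariationOn h0
  have hφv : ∀ b ∈ Icc (0 : ℝ) 1, φ (v b) = g b := fun b hb =>
    edist_eq_zero.1 (edist_naturalParameterization_eq_zero hg.locallyBoundedVariationOn h0 hb)
  have hmaps : ∀ u : Icc (0 : ℝ) 1, (L : ℝ) * u ∈ Icc 0 (L : ℝ) :=
    fun u => ⟨by have := u.2.1; positivity, mul_le_of_le_one_right L.2 u.2.2⟩
  refine ⟨φ ∘ fun u : Icc (0 : ℝ) 1 => (L : ℝ) * u, ?_, ?_, ?_, ?_, ?_⟩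
  · refine LipschitzWith.of_dist_le_mul fun u u' => ?_
    refine (hφ.lipschitzOnWith.dist_le_mul _ (hrange (hmaps u)) _
      (hrange (hmaps u'))).trans_eq ?_
    simp [Real.dist_eq, Subtype.dist_eq, ← mul_sub, abs_mul]
  · rintro _ ⟨u, rfl⟩
    exact ⟨_, Function.invFunOn_mem (hrange (hmaps u)), rfl⟩
  · simpa [hv0] using hφv 0 h0
  · simpa [hv1] using hφv 1 h1
  · calc eVariationOn (φ ∘ fun u : Icc (0 : ℝ) 1 => (L : ℝ) * u) univ
        ≤ eVariationOn φ (v '' Icc 0 1 ∩ Icc 0 L) :=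
          eVariationOn.comp_le_of_monotoneOn _ _
            (fun u _ u' _ h => mul_le_mul_of_nonneg_left h L.2)
            fun u _ => ⟨hrange (hmaps u), hmaps u⟩
      _ = eVariationOn g (Icc 0 1) := by
          refine (hφ (hrange ⟨le_rfl, L.2⟩) (hrange ⟨L.2, le_rfl⟩)).trans ?_
          simp [L, ENNReal.coe_toNNReal hg]

theorem LipschitzWith.of_tendsto {ι α E : Type*} [PseudoEMetricSpace α] [PseudoEMetricSpace E]
    {l : Filter ι} [l.NeBot] {K : ℝ≥0} {F : ι → α → E} {f : α → E}
    (hF : ∀ᶠ i in l, LipschitzWith K (F i)) (hlim : ∀ x, Tendsto (fun i => F i x) l (𝓝 (f x))) :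
    LipschitzWith K f := fun x y =>
  le_of_tendsto ((hlim x).edist (hlim y)) (hF.mono fun _ hi => hi x y)

theorem eVariationOn_le_of_tendsto {ι α E : Type*} [LinearOrder α] [PseudoEMetricSpace E]
    {l : Filter ι} [l.NeBot] {F : ι → α → E} {f : α → E} {s : Set α} {c : ι → ℝ≥0∞}
    {c₀ : ℝ≥0∞} (hlim : ∀ x ∈ s, Tendsto (fun i => F i x) l (𝓝 (f x)))
    (hc : Tendsto c l (𝓝 c₀)) (hle : ∀ᶠ i in l, eVariationOn (F i) s ≤ c i) :
    eVariationOn f s ≤ c₀ :=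
  le_of_forall_lt_imp_le_of_dense fun _ hb =>
    ge_of_tendsto hc (((eVariationOn.lowerSemicontinuous_aux hlim hb).and hle).mono
      fun _ hi => hi.1.le.trans hi.2)

theorem IsCompact.exists_tendsto_pi {ι α E : Type*} [TopologicalSpace E] {P : Set E}
    (hP : IsCompact P) (u : Ultrafilter ι) {F : ι → α → E} (hF : ∀ i, range (F i) ⊆ P) :
    ∃ f : α → E, range f ⊆ P ∧ ∀ x, Tendsto (fun i => F i x) u (𝓝 (f x)) := by
  obtain ⟨f, hfP, hf⟩ := (isCompact_univ_pi fun _ : α => hP).ultrafilter_le_nhds (u.map F)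
    (le_principal_iff.2 (Ultrafilter.mem_map.2 (univ_mem' fun i x _ => hF i ⟨x, rfl⟩)))
  exact ⟨f, range_subset_iff.2 fun x => hfP x trivial, tendsto_pi_nhds.1 hf⟩

theorem isClosed_setOf_segment_subset {E : Type*} [AddCommGroup E] [Module ℝ E]
    [TopologicalSpace E] [ContinuousAdd E] [ContinuousSMul ℝ E] {P : Set E} (hP : IsClosed P) :
    IsClosed {z : E × E | segment ℝ z.1 z.2 ⊆ P} := by
  have : {z : E × E | segment ℝ z.1 z.2 ⊆ P} =
      ⋂ θ ∈ Icc (0 : ℝ) 1, (fun z : E × E => (1 - θ) • z.1 + θ • z.2) ⁻¹' P := by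
    ext z
    simp only [segment_eq_image, image_subset_iff, mem_ofPred_eq, mem_iInter]
    rfl
  rw [this]
  exact isClosed_biInter fun θ _ => hP.preimage (by fun_prop)

theorem IsCompact.setOf_segment_subset {E : Type*} [AddCommGroup E] [Module ℝ E]
    [TopologicalSpace E] [T2Space E] [ContinuousAdd E] [ContinuousSMul ℝ E] {P : Set E}
    (hP : IsCompact P) : IsCompact {z : E × E | segment ℝ z.1 z.2 ⊆ P} :=
  (hP.prod hP).of_isClosed_subset (isClosed_setOf_segment_subset hP.isClosed) fun z hz =>
    ⟨hz (left_mem_segment ℝ z.1 z.2), hz (right_mem_segment ℝ z.1 z.2)⟩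

theorem geoDist_le_eVariationOn {P : Set E2} {γ : Icc (0 : ℝ) 1 → E2} (hγ : Continuous γ)
    (hγP : range γ ⊆ P) : geoDist P (γ 0) (γ 1) ≤ eVariationOn γ univ :=
  sInf_le ⟨γ, hγ, hγP, rfl, rfl, rfl⟩

theorem exists_lipschitzWith_path_of_geoDist_lt {P : Set E2} {x y : E2} {c : ℝ≥0∞}
    (hc : c ≠ ⊤) (h : geoDist P x y < c) :
    ∃ σ : Icc (0 : ℝ) 1 → E2, LipschitzWith c.toNNReal σ ∧ range σ ⊆ P ∧ σ 0 = x ∧ σ 1 = y ∧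
      eVariationOn σ univ < c := by
  obtain ⟨_, ⟨γ, hγ, hγP, rfl, rfl, rfl⟩, hγc⟩ := sInf_lt_iff.1 h
  rw [← eVariationOn_IccExtend zero_le_one] at hγc
  obtain ⟨σ, hlip, hrange, h0, h1, hvar⟩ :=
    exists_lipschitzWith_reparam (continuous_IccExtend_iff.2 hγ).continuousOn hγc.ne_top
  refine ⟨σ, hlip.weaken (ENNReal.toNNReal_mono hc hγc.le), ?_, ?_, ?_, hvar.trans_lt hγc⟩
  · exact hrange.trans ((image_subset_range _ _).trans ((IccExtend_range _ _).trans_subset hγP))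
  · rw [h0, IccExtend_left]
  · rw [h1, IccExtend_right]

theorem isClosed_setOf_geoDist_le {P : Set E2} (hP : IsCompact P) (x : E2) (c : ℝ≥0∞) :
    IsClosed {y | geoDist P x y ≤ c} := by
  rcases eq_or_ne c ⊤ with rfl | hc
  · simp
  refine IsSeqClosed.isClosed fun y y₀ hy hlim => ?_
  set ε : ℕ → ℝ≥0∞ := fun n => ((n : ℝ≥0∞) + 1)⁻¹
  have hε : Tendsto ε atTop (𝓝 0) := by
    simpa [ε, Function.comp_def] using
      ENNReal.tendsto_inv_nat_nhds_zero.comp (tendsto_add_atTop_nat 1)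
  have hpath : ∀ n, ∃ σ : Icc (0 : ℝ) 1 → E2, LipschitzWith (c + 1).toNNReal σ ∧
      range σ ⊆ P ∧ σ 0 = x ∧ σ 1 = y n ∧ eVariationOn σ univ ≤ c + ε n := by
    intro n
    have hε1 : ε n ≤ 1 := ENNReal.inv_le_one.2 le_add_self
    obtain ⟨σ, hlip, hσP, h0, h1, hvar⟩ := exists_lipschitzWith_path_of_geoDist_lt
      (ENNReal.add_ne_top.2 ⟨hc, ne_top_of_le_ne_top ENNReal.one_ne_top hε1⟩)
      ((hy n).trans_lt (ENNReal.lt_add_right hc (by simp [ε])))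
    exact ⟨σ, hlip.weaken (ENNReal.toNNReal_mono (by simp [hc]) (by gcongr)), hσP, h0, h1,
      hvar.le⟩
  choose σ hlip hσP h0 h1 hvar using hpath
  set u := Ultrafilter.of (atTop : Filter ℕ)
  have hu : ↑u ≤ (atTop : Filter ℕ) := Ultrafilter.of_le _
  obtain ⟨σ₀, hσ₀P, hσ₀⟩ := hP.exists_tendsto_pi u hσP
  have hσ₀0 : σ₀ 0 = x := tendsto_nhds_unique (hσ₀ 0) (by simp [h0])
  have hσ₀1 : σ₀ 1 = y₀ := tendsto_nhds_unique (hσ₀ 1) (by simpa [h1] using hlim.mono_left hu)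
  have hσ₀lip : LipschitzWith (c + 1).toNNReal σ₀ := .of_tendsto (.of_forall hlip) hσ₀
  calc geoDist P x y₀ = geoDist P (σ₀ 0) (σ₀ 1) := by rw [hσ₀0, hσ₀1]
    _ ≤ eVariationOn σ₀ univ := geoDist_le_eVariationOn hσ₀lip.continuous hσ₀P
    _ ≤ c := eVariationOn_le_of_tendsto (fun τ _ => hσ₀ τ)
        (by simpa using tendsto_const_nhds.add (hε.mono_left hu)) (.of_forall hvar)

theorem lowerSemicontinuous_geoDist {P : Set E2} (hP : IsCompact P) (x : E2) :
    LowerSemicontinuous (geoDist P x) :=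
  lowerSemicontinuous_iff_isClosed_preimage.2 (isClosed_setOf_geoDist_le hP x)

theorem minsum_optimal_pair_exists_general (P : Set E2) (hP : IsCompact P)
    (s t : E2) (hs : s ∈ P) :
    ∃ s' t' : E2, s' ∈ P ∧ t' ∈ P ∧ segment ℝ s' t' ⊆ P ∧
      ∀ p q : E2, p ∈ P → q ∈ P → segment ℝ p q ⊆ P →
        geoDist P s s' + geoDist P t t' ≤ geoDist P s p + geoDist P t q := by
  have hobj : LowerSemicontinuous fun z : E2 × E2 => geoDist P s z.1 + geoDist P t z.2 :=
    ((lowerSemicontinuous_geoDist hP s).comp continuous_fst).add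
      ((lowerSemicontinuous_geoDist hP t).comp continuous_snd)
  have hss : (s, s) ∈ {z : E2 × E2 | segment ℝ z.1 z.2 ⊆ P} := by simpa using hs
  obtain ⟨⟨s', t'⟩, hvis, hmin⟩ :=
    (hobj.lowerSemicontinuousOn _).exists_isMinOn ⟨_, hss⟩ hP.setOf_segment_subset
  exact ⟨s', t', hvis (left_mem_segment ℝ s' t'), hvis (right_mem_segment ℝ s' t'), hvis,
    fun p q _ _ hpq => hmin (show (p, q) ∈ {z : E2 × E2 | segment ℝ z.1 z.2 ⊆ P} from hpq)⟩

/-- Existence of a min-sum optimal pair for the quickest pair-visibility problem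
in a compact planar set. -/
theorem minsum_optimal_pair_exists (P : Set E2) (hP : IsCompact P)
    (s t : E2) (hs : s ∈ P) (ht : t ∈ P) :
    ∃ s' t' : E2, s' ∈ P ∧ t' ∈ P ∧ segment ℝ s' t' ⊆ P ∧
      ∀ p q : E2, p ∈ P → q ∈ P → segment ℝ p q ⊆ P →
        geoDist P s s' + geoDist P t t' ≤ geoDist P s p + geoDist P t q :=
  minsum_optimal_pair_exists_general P hP s t hs
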